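/- Let k ∈ {3, 4, 6} and let D be a squarefree positive integer. Suppose (t, r, q) parameterizes a complete family of pairing-friendly elliptic curves with embedding degree k and CM discriminant D such that r(x) = Φ_k(t(x) − 1), deg q = deg r, and some y ∈ ℚ[x] satisfies both D·y² = 4q − t² and 2·deg y = deg t. Then q + 1 − t = (1/4)·r and 4q − t² = c·(t − 1), where c = 3 if k = 3, c = 2 if k = 4, and c = 1 if k = 6; equivalently, 4q = (t−1)² + (c+2)(t−1) + 1. -/
import Mathlib

open Polynomial

/-- `f ∈ ℚ[x]` represents integers: there is an integer `a` with `f(a) ∈ ℤ`. -/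
def RepresentsIntegers (f : ℚ[X]) : Prop :=
  ∃ a n : ℤ, f.eval (a : ℚ) = (n : ℚ)

/-- `f ∈ ℚ[x]` represents primes: `f` is nonconstant, irreducible over `ℚ`,
has positive leading coefficient, represents integers, and no prime number
divides every integer value `f(a)` with `a ∈ ℤ`, `f(a) ∈ ℤ`. -/
def RepresentsPrimes (f : ℚ[X]) : Prop :=
  0 < f.natDegree ∧ Irreducible f ∧ 0 < f.leadingCoeff ∧ RepresentsIntegers f ∧
    ∀ p : ℕ, p.Prime → ∃ a n : ℤ, f.eval (a : ℚ) = (n : ℚ) ∧ ¬ (p : ℤ) ∣ n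

/-- `(t, r, q)` parameterizes a complete family of pairing-friendly elliptic curves
with embedding degree `k` and CM discriminant `D`:
(i) `r` represents primes; (ii) `q` represents primes; (iii) `r ∣ q + 1 - t`;
(iv) `r ∣ Φ_k(t - 1)`; (v) `D·y² = 4q - t²` for some `y ∈ ℚ[x]`. -/
def IsCompleteFamily (k D : ℕ) (t r q : ℚ[X]) : Prop :=
  t ≠ 0 ∧ r ≠ 0 ∧ q ≠ 0 ∧
  RepresentsPrimes r ∧ RepresentsPrimes q ∧
  r ∣ (q + 1 - t) ∧
  r ∣ (cyclotomic k ℚ).comp (t - 1) ∧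
  ∃ y : ℚ[X], (D : ℚ[X]) * y ^ 2 = 4 * q - t ^ 2

lemma cyclotomic_four_rat : cyclotomic 4 ℚ = X ^ 2 + 1 := by
  have h := cyclotomic_prime_pow_eq_geom_sum (R := ℚ) (p := 2) (n := 1) Nat.prime_two
  norm_num [Finset.sum_range_succ] at h
  rw [h]; ring

lemma cyclotomic_six_rat : cyclotomic 6 ℚ = X ^ 2 - X + 1 := by
  have h := cyclotomic_expand_eq_cyclotomic_mul (p := 2) (n := 3) Nat.prime_two (by norm_num) ℚ
  rw [cyclotomic_three] at h
  have he : (expand ℚ 2) (X ^ 2 + X + 1 : ℚ[X]) = X ^ 4 + X ^ 2 + 1 := by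
    simp [map_add, map_pow, expand_X]; ring
  rw [he] at h
  have hne : (X ^ 2 + X + 1 : ℚ[X]) ≠ 0 := fun hx => by
    have := congrArg (eval 0) hx; simp at this
  have h2 : (X ^ 2 - X + 1 : ℚ[X]) * (X ^ 2 + X + 1) = cyclotomic (3 * 2) ℚ * (X ^ 2 + X + 1) := by
    rw [← h]; ring
  have h3 := mul_right_cancel₀ hne h2
  norm_num at h3 ⊢

/-- For an ideal family with `k ∈ {3,4,6}`, `r = Φ_k(t - 1)` and `2 deg y = deg t`,
one has `q + 1 - t = (1/4)·r` and `4q - t² = c·(t - 1)` with `c = 3, 2, 1`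
according as `k = 3, 4, 6`. -/
theorem ideal_family_shape_k3_k4_k6 (k D : ℕ) (hk : k = 3 ∨ k = 4 ∨ k = 6)
    (hD : Squarefree D) (hDpos : 0 < D) (t r q : ℚ[X])
    (h : IsCompleteFamily k D t r q)
    (hr : r = (cyclotomic k ℚ).comp (t - 1))
    (hdeg : q.natDegree = r.natDegree)
    (hy : ∃ y : ℚ[X], (D : ℚ[X]) * y ^ 2 = 4 * q - t ^ 2 ∧
      2 * y.natDegree = t.natDegree) :
    q + 1 - t = C (1/4 : ℚ) * r ∧
      ((k = 3 → 4 * q - t ^ 2 = 3 * (t - 1)) ∧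
       (k = 4 → 4 * q - t ^ 2 = 2 * (t - 1)) ∧
       (k = 6 → 4 * q - t ^ 2 = t - 1)) := by
  obtain ⟨ht0, hr0, hq0, hrp, hqp, hdvd, hcyc, -⟩ := h
  obtain ⟨y, hyeq, hydeg⟩ := hy
  set n := t.natDegree with hn
  have hone : (1 : ℚ[X]) = C 1 := C_1.symm
  have hst : (t - 1).natDegree = n := by rw [hone, natDegree_sub_C]
  have h4C : (4 : ℚ[X]) = C (4 : ℚ) := (map_ofNat C 4).symm
  obtain ⟨c', hrc⟩ : ∃ c' : ℚ, r = (t - 1) ^ 2 + C c' * (t - 1) + 1 := by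
    rcases hk with rfl | rfl | rfl
    · exact ⟨1, by rw [hr, cyclotomic_three]; simp [add_comp, pow_comp]⟩
    · exact ⟨0, by rw [hr, cyclotomic_four_rat]; simp [add_comp, pow_comp]⟩
    · exact ⟨-1, by rw [hr, cyclotomic_six_rat]; simp [sub_comp, add_comp, pow_comp]; ring⟩
  have hrdeg : r.natDegree = 2 * n := by
    have htot : Nat.totient k = 2 := by rcases hk with rfl | rfl | rfl <;> decide
    rw [hr, natDegree_comp, natDegree_cyclotomic, hst, htot]
  have hn1 : 1 ≤ n := by
    have := hqp.1
    rw [hdeg, hrdeg] at this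
    omega
  have hne : q + 1 - t ≠ 0 := by
    intro h0
    have hq : q = t - 1 := by linear_combination h0
    have h2 : q.natDegree = n := by rw [hq, hst]
    rw [hdeg, hrdeg] at h2
    omega
  obtain ⟨u, hu⟩ := hdvd
  have hu0 : u ≠ 0 := by rintro rfl; rw [mul_zero] at hu; exact hne hu
  have hudeg : u.natDegree = 0 := by
    have hle : (q + 1 - t).natDegree ≤ 2 * n := by
      calc (q + 1 - t).natDegree ≤ max (q + 1).natDegree t.natDegree := natDegree_sub_le _ _
        _ ≤ max (max q.natDegree (1 : ℚ[X]).natDegree) n :=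
            max_le_max (natDegree_add_le _ _) le_rfl
        _ ≤ 2 * n := by
            simp only [natDegree_one]
            rw [hdeg, hrdeg]
            omega
    rw [hu, natDegree_mul hr0 hu0, hrdeg] at hle
    omega
  obtain ⟨c₀, rfl⟩ : ∃ c₀ : ℚ, u = C c₀ := ⟨u.coeff 0, eq_C_of_natDegree_eq_zero hudeg⟩
  have hc : c₀ = 1 / 4 := by
    by_contra hc4
    have hcne : (4 * c₀ - 1 : ℚ) ≠ 0 := fun hz => hc4 (by linarith)
    have hAB : 4 * q - t ^ 2 =
        C (4 * c₀ - 1) * (t - 1) ^ 2 + (C (4 * c₀ * c' + 2) * (t - 1) + C (4 * c₀ - 1)) := by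
      have e1 : (C (4 * c₀ - 1) : ℚ[X]) = 4 * C c₀ - 1 := by
        rw [C_sub, C_mul, ← h4C, hone]
      have e2 : (C (4 * c₀ * c' + 2) : ℚ[X]) = 4 * C c₀ * C c' + 2 := by
        rw [C_add, C_mul, C_mul, ← h4C, map_ofNat]
      rw [e1, e2]
      linear_combination 4 * hu + 4 * (C c₀) * hrc
    have hdA : (C (4 * c₀ - 1) * (t - 1) ^ 2).natDegree = 2 * n := by
      rw [natDegree_C_mul hcne, natDegree_pow, hst]
    have hdB : (C (4 * c₀ * c' + 2) * (t - 1) + C (4 * c₀ - 1)).natDegree < 2 * n := by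
      have h1 : (C (4 * c₀ * c' + 2) * (t - 1)).natDegree ≤ n := by
        calc (C (4 * c₀ * c' + 2) * (t - 1)).natDegree
            ≤ (C (4 * c₀ * c' + 2)).natDegree + (t - 1).natDegree := natDegree_mul_le
          _ ≤ n := by rw [natDegree_C, hst]; omega
      have h2 := natDegree_add_le (C (4 * c₀ * c' + 2) * (t - 1)) (C (4 * c₀ - 1))
      simp only [natDegree_C] at h2
      omega
    have hd : (4 * q - t ^ 2).natDegree = 2 * n := by
      rw [hAB, natDegree_add_eq_left_of_natDegree_lt (by rw [hdA]; exact hdB), hdA]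
    have hy0 : y ≠ 0 := by
      rintro rfl
      have hz : (4 * q - t ^ 2) = 0 := by simpa using hyeq.symm
      rw [hz] at hd
      simp only [natDegree_zero] at hd
      omega
    have hD0 : ((D : ℚ[X])) ≠ 0 := by
      simp only [ne_eq, Nat.cast_eq_zero]
      exact hDpos.ne'
    have hdn : (4 * q - t ^ 2).natDegree = n := by
      rw [← hyeq, natDegree_mul hD0 (pow_ne_zero 2 hy0), natDegree_pow]
      have hDd : ((D : ℚ[X])).natDegree = 0 := by
        rw [← map_natCast (C : ℚ →+* ℚ[X])]
        exact natDegree_C _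
      omega
    omega
  rw [hc] at hu
  have hmain : q + 1 - t = C (1/4 : ℚ) * r := by rw [hu]; ring
  have h4 : (4 : ℚ[X]) * C (1/4 : ℚ) = 1 := by
    rw [h4C, ← C_mul, hone]; norm_num
  refine ⟨hmain, ?_, ?_, ?_⟩ <;> rintro rfl
  · have hr3 : r = (t - 1) ^ 2 + (t - 1) + 1 := by
      rw [hr, cyclotomic_three]; simp [add_comp, pow_comp]
    linear_combination 4 * hmain + hr3 + r * h4
  · have hr4 : r = (t - 1) ^ 2 + 1 := by
      rw [hr, cyclotomic_four_rat]; simp [add_comp, pow_comp]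
    linear_combination 4 * hmain + hr4 + r * h4
  · have hr6 : r = (t - 1) ^ 2 - (t - 1) + 1 := by
      rw [hr, cyclotomic_six_rat]; simp [sub_comp, add_comp, pow_comp]
    linear_combination 4 * hmain + hr6 + r * h4
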